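/- arXiv:2309.11243 — 2 statements merged into one kernel-verified Lean document; each statement's English description precedes it below -/
import Mathlib

section
/- Suppose 0 < D_R < σ²·I, let g* = √(σ²·I / D_R), and suppose (g*)²·δU_R ≤ σ²·T. Then g* > 1, the point (1, g*) lies in the feasible set F of problem (P0), the intelligibility constraint holds there with equality ((g*)²·p(1) = σ²·I), and (1, g*) minimizes the objective f among all feasible points on the boundary slice α = 1: for every g with (1, g) ∈ F one has (1 − g*)² ≤ (1 − g)². -/
/-- Boundary case α = 1 with NLE gain g* = √(σ²·I / D_R) of problem (P0). -/
theorem stmt1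
(δSR δS0 δSc δUR δU0 δUc σ2 I T : ℝ)
    (hσ : 0 < σ2) (hI : 0 < I) (hT : 0 < T)
    (DR D0 Dc : ℝ)
    (hDR : DR = δSR - I * δUR) (hD0 : D0 = δS0 - I * δU0) (hDc : Dc = δSc - I * δUc)
    (p : ℝ → ℝ)
    (hp : ∀ α : ℝ, p α = α ^ 2 * DR + (1 - α) ^ 2 * D0 + α * (1 - α) * Dc)
    (δU : ℝ → ℝ)
    (hδU : ∀ α : ℝ, δU α = α ^ 2 * δUR + (1 - α) ^ 2 * δU0 + α * (1 - α) * δUc)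
    (f : ℝ → ℝ → ℝ)
    (hf : ∀ α g : ℝ, f α g = (1 - α) ^ 2 + (1 - g) ^ 2)
    (F : Set (ℝ × ℝ))
    (hF : F = {q : ℝ × ℝ | 0 ≤ q.1 ∧ q.1 ≤ 1 ∧ 1 ≤ q.2 ∧
      q.2 ^ 2 * p q.1 ≥ σ2 * I ∧ q.2 ^ 2 * δU q.1 ≤ σ2 * T})
    (h1 : 0 < DR) (h2 : DR < σ2 * I)
    (gstar : ℝ) (hg : gstar = Real.sqrt (σ2 * I / DR))
    (h3 : gstar ^ 2 * δUR ≤ σ2 * T) :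
    1 < gstar ∧ (1, gstar) ∈ F ∧ gstar ^ 2 * p 1 = σ2 * I ∧
      (∀ g : ℝ, (1, g) ∈ F → (1 - gstar) ^ 2 ≤ (1 - g) ^ 2) := by
  have hσI : 0 < σ2 * I := mul_pos hσ hI
  have hsq : gstar ^ 2 = σ2 * I / DR := by
    rw [hg, sq, Real.mul_self_sqrt (le_of_lt (div_pos hσI h1))]
  have hg0 : 0 ≤ gstar := hg ▸ Real.sqrt_nonneg _
  have hsq1 : 1 < gstar ^ 2 := by
    rw [hsq]; exact (one_lt_div h1).mpr h2
  have hg1 : 1 < gstar := by nlinarith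
  have hp1 : p 1 = DR := by rw [hp]; ring
  have hU1 : δU 1 = δUR := by rw [hδU]; ring
  have heq : gstar ^ 2 * p 1 = σ2 * I := by
    rw [hp1, hsq]; field_simp
  refine ⟨hg1, ?_, heq, ?_⟩
  · rw [hF]
    exact ⟨zero_le_one, le_refl 1, le_of_lt hg1, le_of_eq heq.symm, by rwa [hU1]⟩
  · intro g hgF
    rw [hF] at hgF
    obtain ⟨-, -, hg1', hcon, -⟩ := hgF
    simp only at hcon hg1'
    rw [hp1] at hcon
    have : gstar ^ 2 ≤ g ^ 2 := by
      rw [hsq]; rw [ge_iff_le, ← div_le_iff₀ h1] at hcon; linarith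
    have hgle : gstar ≤ g := by nlinarith
    nlinarith
end

section
/- Suppose 0 < D_0 < σ²·I, let g* = √(σ²·I / D_0), and suppose (g*)²·δU_0 ≤ σ²·T. Then g* > 1, the point (0, g*) lies in the feasible set F of problem (P0), the intelligibility constraint holds there with equality ((g*)²·p(0) = σ²·I), and (0, g*) minimizes the objective f among all feasible points on the boundary slice α = 0: for every g with (0, g) ∈ F one has (1 − g*)² ≤ (1 − g)². -/
/-- Boundary case α = 0 with NLE gain g* = √(σ²·I / D_0) of problem (P0). -/
theorem stmt3
(δSR δS0 δSc δUR δU0 δUc σ2 I T : ℝ)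
    (hσ : 0 < σ2) (hI : 0 < I) (hT : 0 < T)
    (DR D0 Dc : ℝ)
    (hDR : DR = δSR - I * δUR) (hD0 : D0 = δS0 - I * δU0) (hDc : Dc = δSc - I * δUc)
    (p : ℝ → ℝ)
    (hp : ∀ α : ℝ, p α = α ^ 2 * DR + (1 - α) ^ 2 * D0 + α * (1 - α) * Dc)
    (δU : ℝ → ℝ)
    (hδU : ∀ α : ℝ, δU α = α ^ 2 * δUR + (1 - α) ^ 2 * δU0 + α * (1 - α) * δUc)
    (f : ℝ → ℝ → ℝ)
    (hf : ∀ α g : ℝ, f α g = (1 - α) ^ 2 + (1 - g) ^ 2)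
    (F : Set (ℝ × ℝ))
    (hF : F = {q : ℝ × ℝ | 0 ≤ q.1 ∧ q.1 ≤ 1 ∧ 1 ≤ q.2 ∧
      q.2 ^ 2 * p q.1 ≥ σ2 * I ∧ q.2 ^ 2 * δU q.1 ≤ σ2 * T})
    (h1 : 0 < D0) (h2 : D0 < σ2 * I)
    (gstar : ℝ) (hg : gstar = Real.sqrt (σ2 * I / D0))
    (h3 : gstar ^ 2 * δU0 ≤ σ2 * T) :
    1 < gstar ∧ (0, gstar) ∈ F ∧ gstar ^ 2 * p 0 = σ2 * I ∧
      (∀ g : ℝ, (0, g) ∈ F → (1 - gstar) ^ 2 ≤ (1 - g) ^ 2) := by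

  have hp0 : p 0 = D0 := by rw [hp]; ring
  have hδU0 : δU 0 = δU0 := by rw [hδU]; ring
  have hgsq : gstar ^ 2 = σ2 * I / D0 := by
    rw [hg, Real.sq_sqrt]; positivity
  have hgI : gstar ^ 2 * D0 = σ2 * I := by
    rw [hgsq]; field_simp
  have hgt : 1 < gstar ^ 2 := by
    rw [hgsq]; rw [lt_div_iff₀ h1]; linarith
  have hgpos : 0 ≤ gstar := by rw [hg]; positivity
  have hg1 : 1 < gstar := by nlinarith
  refine ⟨hg1, ?_, ?_, ?_⟩
  · rw [hF]
    refine ⟨le_refl 0, by norm_num, le_of_lt hg1, ?_, ?_⟩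
    · simp only [hp0]; rw [hgI]
    · simp only [hδU0]; exact h3
  · rw [hp0]; exact hgI
  · intro g hgF
    rw [hF] at hgF
    obtain ⟨-, -, hg1', hgc, -⟩ := hgF
    simp only [hp0] at hgc
    simp only at hg1'
    have hgge : gstar ≤ g := by
      by_contra hlt
      push_neg at hlt
      nlinarith [mul_pos h1 (mul_pos (sub_pos.mpr hlt)
        (by nlinarith : (0:ℝ) < gstar + g))]
    nlinarith [mul_nonneg (sub_nonneg.mpr hgge) (by linarith : (0:ℝ) ≤ g + gstar - 2)]
end
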